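/- arXiv:1801.00838 — 2 statements merged into one kernel-verified Lean document; each statement's English description precedes it below -/
import Mathlib

section
/- Let ξ₁,…,ξₙ be distinct real numbers, σ₁,…,σₙ real numbers, and c₁,…,cₙ nonzero complex numbers. Then the function f(y) = ∑_{j=1}^n c_j·y^{σ_j + i·ξ_j} belongs to L²([1,∞), dy/y²) if and only if σ_j < 1/2 for every j. -/
open Complex MeasureTheory Set Real Filter

noncomputable section

/-- The completed Riemann zeta function `ξ(s) = π^{-s/2} Γ(s/2) ζ(s)`. -/
def xi (s : ℂ) : ℂ := (π : ℂ) ^ (-s / 2) * Complex.Gamma (s / 2) * riemannZeta s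

/-- `c_s = ξ(2-2s)/ξ(2s)`. -/
def cc (s : ℂ) : ℂ := xi (2 - 2 * s) / xi (2 * s)

/-- The real-analytic Eisenstein series for `SL₂(ℤ)`:
`E_s(z) = (1/2) ∑_{coprime (c,d)} (Im z / |cz+d|²)^s`. -/
def Eis (s z : ℂ) : ℂ :=
  (1 / 2) * ∑' p : {p : ℤ × ℤ // IsCoprime p.1 p.2},
    ((z.im / ‖(p.1.1 : ℂ) * z + (p.1.2 : ℂ)‖ ^ 2 : ℝ) : ℂ) ^ s

/-- The summand of the Arthur truncation: `u^s` for `u < T`, `-c_s u^{1-s}` for `u ≥ T`. -/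
def hTrunc (T : ℝ) (s : ℂ) (u : ℝ) : ℂ :=
  if u < T then (u : ℂ) ^ s else -(cc s) * (u : ℂ) ^ (1 - s)

/-- Arthur truncation `∧^T E_s` of the Eisenstein series. -/
def truncEis (T : ℝ) (s z : ℂ) : ℂ :=
  (1 / 2) * ∑' p : {p : ℤ × ℤ // IsCoprime p.1 p.2},
    hTrunc T s (z.im / ‖(p.1.1 : ℂ) * z + (p.1.2 : ℂ)‖ ^ 2)

/-- The standard fundamental domain for `SL₂(ℤ)`, as a subset of `ℝ × ℝ` via `z = x + iy`. -/
def FD : Set (ℝ × ℝ) := {p | 0 < p.2 ∧ 1 ≤ p.1 ^ 2 + p.2 ^ 2 ∧ |p.1| ≤ 1 / 2}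

/-- The Whittaker function `W_s(y) = √y ∫₀^∞ t^{s-1/2} e^{-(t+1/t)πy} dt/t`. -/
def Whit (s : ℂ) (y : ℝ) : ℂ :=
  (Real.sqrt y : ℂ) *
    ∫ t in Ioi (0 : ℝ), (t : ℂ) ^ (s - 1 / 2) * Complex.exp (-(((t : ℂ) + 1 / t) * π * y)) / t

/-- `σ_w(m) = ∑_{0<d∣m} d^w` with complex powers. -/
def sigmaC (w : ℂ) (m : ℕ) : ℂ := ∑ d ∈ m.divisors, (d : ℂ) ^ w

/-- `φ(n,s) = π^s σ_{2s-1}(|n|) / (Γ(s) ζ(2s) |n|^{s-1/2})`. -/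
def phiC (n : ℤ) (s : ℂ) : ℂ :=
  (π : ℂ) ^ s * sigmaC (2 * s - 1) n.natAbs /
    (Complex.Gamma s * riemannZeta (2 * s) * ((n.natAbs : ℝ) : ℂ) ^ (s - 1 / 2))

/-!
If every `σⱼ < 1/2`, then `|f(y)| ≤ C y^a` on `[1, ∞)` for some `a < 1/2`, and `|f|²/y²` is
dominated by the integrable `C² y^(2a-2)`.

Conversely, let `σⱼ` be maximal and pair `f` with `y^(-wⱼ-1)`, `wⱼ = σⱼ + iξⱼ`, over `[1, X]`.
Since the exponents are distinct and `Re wₖ ≤ Re wⱼ`, this pairing is `cⱼ log X + O(1)`.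
If `σⱼ ≥ 1/2`, then `|y^(-wⱼ)|² ≤ 1/y`, and AM-GM against `|f(y)|/y` bounds the pairing by
`(t ‖f‖² + (log X)/t)/2` for every `t > 0`; taking `t = 1/|cⱼ|` contradicts `cⱼ ≠ 0` as `X → ∞`.
-/

open Function

theorem memLp_two_withDensity_ofReal_iff {α E : Type*} [MeasurableSpace α] [NormedAddCommGroup E]
    {μ : Measure α} {ρ : α → ℝ} (hρ : Measurable ρ) (hρ₀ : ∀ x, 0 ≤ ρ x) {g : α → E}
    (hg : AEStronglyMeasurable g μ) :
    MemLp g 2 (μ.withDensity fun x => ENNReal.ofReal (ρ x)) ↔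
      Integrable (fun x => ‖g x‖ ^ 2 * ρ x) μ := by
  rw [memLp_two_iff_integrable_sq_norm (hg.mono_ac (withDensity_absolutelyContinuous _ _)),
    integrable_withDensity_iff hρ.ennreal_ofReal (ae_of_all _ fun _ => ENNReal.ofReal_lt_top)]
  simp only [ENNReal.toReal_ofReal (hρ₀ _)]

theorem integral_one_cpow_neg_one {X : ℝ} (hX : 0 < X) :
    ∫ y in (1 : ℝ)..X, (y : ℂ) ^ (-1 : ℂ) = Real.log X := by
  have h : ∀ y : ℝ, (y : ℂ) ^ (-1 : ℂ) = ((y⁻¹ : ℝ) : ℂ) := by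
    intro y; rw [cpow_neg_one, ofReal_inv]
  simp only [h, intervalIntegral.integral_ofReal, integral_inv_of_pos one_pos hX, div_one]

theorem integral_one_cpow_sub_one {u : ℂ} (hu : u ≠ 0) {X : ℝ} (hX : 0 < X) :
    ∫ y in (1 : ℝ)..X, (y : ℂ) ^ (u - 1) = ((X : ℂ) ^ u - 1) / u := by
  have h0 : (0 : ℝ) ∉ uIcc 1 X := fun h => (lt_min one_pos hX).not_ge h.1
  rw [integral_cpow (Or.inr ⟨by simpa [sub_eq_neg_self] using hu, h0⟩)]
  simp

theorem norm_cpow_sub_one_le_two {X : ℝ} (hX : 1 ≤ X) {u : ℂ} (hu : u.re ≤ 0) :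
    ‖(X : ℂ) ^ u - 1‖ ≤ 2 := by
  refine (norm_sub_le _ _).trans ?_
  rw [norm_cpow_eq_rpow_re_of_pos (by linarith), norm_one]
  linarith [Real.rpow_le_one_of_one_le_of_nonpos hX hu]

theorem mul_le_half_mul_sq_add_sq_div {a b t : ℝ} (ht : 0 < t) :
    a * b ≤ (t * a ^ 2 + b ^ 2 / t) / 2 := by
  have : t * a ^ 2 + b ^ 2 / t - 2 * (a * b) = (t * a - b) ^ 2 / t := by field_simp; ring
  linarith [div_nonneg (sq_nonneg (t * a - b)) ht.le]

theorem norm_integral_mul_cpow_neg_sub_one_le {g : ℝ → ℂ} {w : ℂ} (hw : 1 / 2 ≤ w.re)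
    (hg : IntegrableOn (fun y => ‖g y‖ ^ 2 / y ^ 2) (Ici 1)) {t X : ℝ} (ht : 0 < t) (hX : 1 ≤ X) :
    ‖∫ y in (1 : ℝ)..X, g y * (y : ℂ) ^ (-w - 1)‖ ≤
      (t * (∫ y in Ici 1, ‖g y‖ ^ 2 / y ^ 2) + Real.log X / t) / 2 := by
  have hpt : ∀ y ∈ Ioc 1 X,
      ‖g y * (y : ℂ) ^ (-w - 1)‖ ≤ (t * (‖g y‖ ^ 2 / y ^ 2) + y⁻¹ / t) / 2 := by
    intro y hy
    have hy₀ : 0 < y := one_pos.trans hy.1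
    have hsplit : ‖g y * (y : ℂ) ^ (-w - 1)‖ = ‖g y‖ / y * y ^ (-w.re) := by
      rw [norm_mul, norm_cpow_eq_rpow_re_of_pos hy₀, show (-w - 1).re = -w.re - 1 by simp,
        Real.rpow_sub hy₀, Real.rpow_one]
      ring
    have hsq : (y ^ (-w.re)) ^ 2 ≤ y⁻¹ := by
      rw [← Real.rpow_natCast, ← Real.rpow_mul hy₀.le, ← Real.rpow_neg_one]
      exact Real.rpow_le_rpow_of_exponent_le hy.1.le (by push_cast; linarith)
    calc ‖g y * (y : ℂ) ^ (-w - 1)‖ ≤ (t * (‖g y‖ / y) ^ 2 + (y ^ (-w.re)) ^ 2 / t) / 2 :=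
          hsplit ▸ mul_le_half_mul_sq_add_sq_div ht
      _ ≤ (t * (‖g y‖ ^ 2 / y ^ 2) + y⁻¹ / t) / 2 := by rw [div_pow]; gcongr
  have hIoc : Ioc (1 : ℝ) X ⊆ Ici 1 := Ioc_subset_Icc_self.trans Icc_subset_Ici_self
  have hgX : IntervalIntegrable (fun y => ‖g y‖ ^ 2 / y ^ 2) volume 1 X :=
    (intervalIntegrable_iff_integrableOn_Ioc_of_le hX).2 (hg.mono_set hIoc)
  have hinv : IntervalIntegrable (fun y : ℝ => y⁻¹) volume 1 X :=
    intervalIntegrable_inv_iff.2 (Or.inr fun h => (lt_min one_pos (one_pos.trans_le hX)).not_ge h.1)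
  calc ‖∫ y in (1 : ℝ)..X, g y * (y : ℂ) ^ (-w - 1)‖
      ≤ ∫ y in (1 : ℝ)..X, (t * (‖g y‖ ^ 2 / y ^ 2) + y⁻¹ / t) / 2 :=
        intervalIntegral.norm_integral_le_of_norm_le hX (ae_of_all _ hpt)
          (((hgX.const_mul t).add (hinv.div_const t)).div_const 2)
    _ = (t * (∫ y in (1 : ℝ)..X, ‖g y‖ ^ 2 / y ^ 2) + Real.log X / t) / 2 := by
        rw [intervalIntegral.integral_div, intervalIntegral.integral_add (hgX.const_mul t)
          (hinv.div_const t), intervalIntegral.integral_const_mul, intervalIntegral.integral_div,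
          integral_inv_of_pos one_pos (one_pos.trans_le hX), div_one]
    _ ≤ (t * (∫ y in Ici 1, ‖g y‖ ^ 2 / y ^ 2) + Real.log X / t) / 2 := by
        rw [intervalIntegral.integral_of_le hX]
        have := setIntegral_mono_set hg (ae_of_all _ fun y => by positivity)
          hIoc.eventuallyLE
        linarith [mul_le_mul_of_nonneg_left this ht.le]

def cpowSum {ι : Type*} [Fintype ι] (c w : ι → ℂ) (y : ℝ) : ℂ := ∑ j, c j * (y : ℂ) ^ w j

section cpowSum

variable {ι : Type*} [Fintype ι] (c w : ι → ℂ)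

theorem continuousOn_cpowSum : ContinuousOn (cpowSum c w) (Ioi 0) :=
  continuousOn_finsetSum _ fun j _ => continuousOn_const.mul fun y hy =>
    (continuousAt_ofReal_cpow_const y (w j) (Or.inr (ne_of_gt hy))).continuousWithinAt

theorem norm_cpowSum_le {a y : ℝ} (hwa : ∀ j, (w j).re ≤ a) (hy : 1 ≤ y) :
    ‖cpowSum c w y‖ ≤ (∑ j, ‖c j‖) * y ^ a := by
  rw [cpowSum, Finset.sum_mul]
  refine (norm_sum_le _ _).trans (Finset.sum_le_sum fun j _ => ?_)
  rw [norm_mul, norm_cpow_eq_rpow_re_of_pos (by linarith)]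
  exact mul_le_mul_of_nonneg_left (Real.rpow_le_rpow_of_exponent_le hy (hwa j)) (norm_nonneg _)

theorem integrableOn_norm_cpowSum_sq_div_sq (hw : ∀ j, (w j).re < 1 / 2) :
    IntegrableOn (fun y => ‖cpowSum c w y‖ ^ 2 / y ^ 2) (Ici 1) := by
  obtain ⟨a, hwa, ha⟩ : ∃ a, (∀ j, (w j).re < a) ∧ a < 1 / 2 :=
    (((eventually_all.2 fun j => eventually_gt_nhds (hw j)).filter_mono
      nhdsWithin_le_nhds).and self_mem_nhdsWithin).exists (f := nhdsWithin (1 / 2) (Iio (1 / 2)))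
  set C := ∑ j, ‖c j‖
  have hmaj : IntegrableOn (fun y : ℝ => C ^ 2 * y ^ (2 * a - 2)) (Ici 1) := by
    rw [integrableOn_Ici_iff_integrableOn_Ioi]
    exact ((integrableOn_Ioi_rpow_iff one_pos).2 (by linarith)).const_mul _
  have hmeas :
      AEStronglyMeasurable (fun y => ‖cpowSum c w y‖ ^ 2 / y ^ 2) (volume.restrict (Ici 1)) :=
    (((continuousOn_cpowSum c w).norm.pow 2).div (continuousOn_id.pow 2) fun y hy =>
      pow_ne_zero 2 (ne_of_gt hy)).aestronglyMeasurable measurableSet_Ioi |>.mono_measure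
      (Measure.restrict_mono (Ici_subset_Ioi.2 one_pos) le_rfl)
  refine hmaj.mono' hmeas ((ae_restrict_iff' measurableSet_Ici).2 (ae_of_all _ fun y hy => ?_))
  have hy₀ : 0 < y := one_pos.trans_le hy
  rw [Real.norm_of_nonneg (by positivity)]
  calc ‖cpowSum c w y‖ ^ 2 / y ^ 2 ≤ (C * y ^ a) ^ 2 / y ^ 2 := by
        gcongr; exact norm_cpowSum_le c w (fun j => (hwa j).le) hy
    _ = C ^ 2 * y ^ (2 * a - 2) := by
        rw [Real.rpow_sub hy₀, mul_comm 2 a, Real.rpow_mul hy₀.le, Real.rpow_two, Real.rpow_two]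
        ring

theorem integral_cpowSum_mul_cpow_neg_sub_one [DecidableEq ι] (hw : Injective w) (j : ι) {X : ℝ}
    (hX : 0 < X) :
    ∫ y in (1 : ℝ)..X, cpowSum c w y * (y : ℂ) ^ (-w j - 1) =
      c j * Real.log X +
        ∑ k ∈ Finset.univ.erase j, c k * (((X : ℂ) ^ (w k - w j) - 1) / (w k - w j)) := by
  have h0 : (0 : ℝ) ∉ uIcc 1 X := fun h => (lt_min one_pos hX).not_ge h.1
  have hsum : ∀ y ∈ uIcc 1 X,
      cpowSum c w y * (y : ℂ) ^ (-w j - 1) = ∑ k, c k * (y : ℂ) ^ (w k - w j - 1) := by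
    intro y hy
    have hy₀ : (y : ℂ) ≠ 0 := ofReal_ne_zero.2 (ne_of_mem_of_not_mem hy h0)
    rw [cpowSum, Finset.sum_mul]
    refine Finset.sum_congr rfl fun k _ => ?_
    rw [mul_assoc, ← cpow_add _ _ hy₀]
    ring_nf
  rw [intervalIntegral.integral_congr hsum, intervalIntegral.integral_finsetSum fun k _ =>
      (intervalIntegral.intervalIntegrable_cpow (Or.inr h0)).const_mul (c k),
    ← Finset.add_sum_erase _ _ (Finset.mem_univ j)]
  simp_rw [intervalIntegral.integral_const_mul]
  congr 1
  · rw [sub_self, zero_sub, integral_one_cpow_neg_one hX]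
  · refine Finset.sum_congr rfl fun k hk => ?_
    rw [integral_one_cpow_sub_one (sub_ne_zero.2 (hw.ne (Finset.ne_of_mem_erase hk))) hX]

theorem exists_norm_integral_cpowSum_mul_cpow_ge (hw : Injective w) {j : ι}
    (hj : ∀ k, (w k).re ≤ (w j).re) :
    ∃ B, ∀ X ≥ 1,
      ‖c j‖ * Real.log X - B ≤ ‖∫ y in (1 : ℝ)..X, cpowSum c w y * (y : ℂ) ^ (-w j - 1)‖ := by
  classical
  refine ⟨∑ k ∈ Finset.univ.erase j, ‖c k‖ * (2 / ‖w k - w j‖), fun X hX => ?_⟩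
  rw [integral_cpowSum_mul_cpow_neg_sub_one c w hw j (one_pos.trans_le hX)]
  set R := ∑ k ∈ Finset.univ.erase j, c k * (((X : ℂ) ^ (w k - w j) - 1) / (w k - w j))
  have hR : ‖R‖ ≤ ∑ k ∈ Finset.univ.erase j, ‖c k‖ * (2 / ‖w k - w j‖) := by
    refine (norm_sum_le _ _).trans (Finset.sum_le_sum fun k _ => ?_)
    rw [norm_mul, norm_div]
    gcongr
    exact norm_cpow_sub_one_le_two hX (by rw [sub_re]; linarith [hj k])
  have hmain : ‖c j * (Real.log X : ℂ)‖ = ‖c j‖ * Real.log X := by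
    rw [norm_mul, norm_real, Real.norm_of_nonneg (Real.log_nonneg hX)]
  have htri := norm_sub_le (c j * (Real.log X : ℂ) + R) R
  rw [add_sub_cancel_right, hmain] at htri
  linarith

theorem re_lt_half_of_integrableOn_norm_cpowSum_sq_div_sq (hw : Injective w)
    (hc : ∀ j, c j ≠ 0) (hint : IntegrableOn (fun y => ‖cpowSum c w y‖ ^ 2 / y ^ 2) (Ici 1))
    (j : ι) :
    (w j).re < 1 / 2 := by
  by_contra! hj
  obtain ⟨j₀, -, hmax⟩ :=
    Finset.exists_max_image Finset.univ (fun k => (w k).re) ⟨j, Finset.mem_univ j⟩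
  obtain ⟨B, hB⟩ :=
    exists_norm_integral_cpowSum_mul_cpow_ge c w hw fun k => hmax k (Finset.mem_univ k)
  set M := ∫ y in Ici 1, ‖cpowSum c w y‖ ^ 2 / y ^ 2
  have hc₀ : 0 < ‖c j₀‖ := norm_pos_iff.2 (hc j₀)
  -- With `t = ‖c j₀‖⁻¹` the upper bound absorbs half of the lower bound `‖c j₀‖ log X`.
  have hbound : ∀ X ≥ 1, ‖c j₀‖ / 2 * Real.log X ≤ B + M / (2 * ‖c j₀‖) := by
    intro X hX
    have hupper := norm_integral_mul_cpow_neg_sub_one_le (hj.trans (hmax j (Finset.mem_univ j)))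
      hint (inv_pos.2 hc₀) hX
    have hlower := hB X hX
    rw [div_inv_eq_mul] at hupper
    have hM : M / (2 * ‖c j₀‖) = ‖c j₀‖⁻¹ * M / 2 := by ring
    linarith
  have hlog := Real.tendsto_log_atTop.const_mul_atTop (half_pos hc₀)
  obtain ⟨X, hX, hX₁⟩ :=
    ((hlog.eventually_gt_atTop (B + M / (2 * ‖c j₀‖))).and (eventually_ge_atTop 1)).exists
  exact (hbound X hX₁).not_gt hX

end cpowSum

theorem stmt1 (n : ℕ) (xiv : Fin n → ℝ) (hxiv : Function.Injective xiv)
    (sigv : Fin n → ℝ) (c : Fin n → ℂ) (hc : ∀ j, c j ≠ 0) :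
    MemLp (fun y : ℝ => ∑ j, c j * (y : ℂ) ^ ((sigv j : ℂ) + (xiv j : ℂ) * I)) 2
      ((volume.restrict (Ici (1 : ℝ))).withDensity fun y => ENNReal.ofReal (1 / y ^ 2)) ↔
      ∀ j, sigv j < 1 / 2 := by
  set w : Fin n → ℂ := fun j => (sigv j : ℂ) + (xiv j : ℂ) * I
  have hw : Injective w := fun j k h => hxiv (by simpa [w] using congrArg im h)
  have hre : ∀ j, (w j).re = sigv j := by simp [w]
  have hmeas : AEStronglyMeasurable (cpowSum c w) (volume.restrict (Ici 1)) :=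
    ((continuousOn_cpowSum c w).mono (Ici_subset_Ioi.2 one_pos)).aestronglyMeasurable
      measurableSet_Ici
  change MemLp (cpowSum c w) 2 _ ↔ _
  rw [memLp_two_withDensity_ofReal_iff (by fun_prop) (fun y => by positivity) hmeas]
  simp only [mul_one_div, ← hre]
  exact ⟨re_lt_half_of_integrableOn_norm_cpowSum_sq_div_sq c w hw hc,
    integrableOn_norm_cpowSum_sq_div_sq c w⟩
end
end

section
/- Let ξ₁,…,ξₙ be distinct real numbers and c₁,…,cₙ complex numbers, not all zero. Then the function f(y) = ∑_{j=1}^n c_j·y^{1/2 + i·ξ_j} is NOT in L²([1,∞), dy/y²); that is, ∫₁^∞ |∑_j c_j y^{1/2+iξ_j}|² y^{-2} dy = ∞. -/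
open Complex MeasureTheory Set Real Filter

noncomputable section

/-! Expanding the square, `|∑ cⱼ y^{1/2+iξⱼ}|² y⁻² = ∑_{j,k} cⱼ c̄ₖ y^{i(ξⱼ-ξₖ)-1}`. On `[1, Y]` the
diagonal terms integrate to `(∑ |cⱼ|²) log Y → ∞`, while each off-diagonal term integrates to
`(Y^{i(ξⱼ-ξₖ)} - 1) / (i(ξⱼ-ξₖ))`, of modulus at most `2 / |ξⱼ - ξₖ|` since the frequencies are
distinct. -/

open scoped ComplexConjugate

lemma conj_ofReal_cpow {y : ℝ} (hy : 0 ≤ y) (w : ℂ) :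
    conj ((y : ℂ) ^ w) = (y : ℂ) ^ conj w := by
  have harg : (y : ℂ).arg ≠ π := by
    rw [arg_ofReal_of_nonneg hy]
    exact Real.pi_ne_zero.symm
  rw [cpow_conj _ _ harg, conj_ofReal]

lemma norm_sum_mul_ofReal_cpow_sq {ι : Type*} [Fintype ι] (c w : ι → ℂ) {y : ℝ} (hy : 0 < y) :
    ‖∑ j, c j * (y : ℂ) ^ w j‖ ^ 2 =
      (∑ j, ∑ k, c j * conj (c k) * (y : ℂ) ^ (w j + conj (w k))).re := by
  have hy' : (y : ℂ) ≠ 0 := ofReal_ne_zero.mpr hy.ne'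
  rw [Complex.sq_norm, ← ofReal_re (normSq _), ← mul_conj, map_sum, Finset.sum_mul_sum]
  congr 1
  refine Finset.sum_congr rfl fun j _ => Finset.sum_congr rfl fun k _ => ?_
  rw [map_mul, conj_ofReal_cpow hy.le, cpow_add _ _ hy']
  ring

lemma norm_sum_mul_cpow_half_add_sq_div_sq {ι : Type*} [Fintype ι] (c : ι → ℂ) (ξ : ι → ℝ)
    {y : ℝ} (hy : 0 < y) :
    ‖∑ j, c j * (y : ℂ) ^ ((1 / 2 : ℂ) + (ξ j : ℂ) * I)‖ ^ 2 / y ^ 2 =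
      (∑ j, ∑ k, c j * conj (c k) * (y : ℂ) ^ (((ξ j - ξ k : ℝ) : ℂ) * I - 1)).re := by
  have hy' : (y : ℂ) ≠ 0 := ofReal_ne_zero.mpr hy.ne'
  rw [norm_sum_mul_ofReal_cpow_sq c _ hy, ← div_ofReal_re, Finset.sum_div]
  congr 1
  refine Finset.sum_congr rfl fun j _ => ?_
  rw [Finset.sum_div]
  refine Finset.sum_congr rfl fun k _ => ?_
  rw [mul_div_assoc, ofReal_pow, ← cpow_natCast, ← cpow_sub _ _ hy']
  congr 2
  simp only [map_add, map_mul, map_div₀, map_one, map_ofNat, conj_ofReal, conj_I]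
  push_cast
  ring

lemma intervalIntegral_ofReal_cpow_neg_one {a b : ℝ} (ha : 0 < a) (hb : 0 < b) :
    ∫ y in a..b, (y : ℂ) ^ (-1 : ℂ) = (Real.log (b / a) : ℂ) := by
  have h0 : (0 : ℝ) ∉ uIcc a b := fun h => (lt_min ha hb).not_ge h.1
  simp_rw [cpow_neg_one, ← ofReal_inv]
  rw [intervalIntegral.integral_ofReal, integral_inv h0]

lemma norm_intervalIntegral_ofReal_cpow_mul_I_sub_one_le {α a b : ℝ} (hα : α ≠ 0) (ha : 0 < a)
    (hb : 0 < b) : ‖∫ y in a..b, (y : ℂ) ^ ((α : ℂ) * I - 1)‖ ≤ 2 / |α| := by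
  have h0 : (0 : ℝ) ∉ uIcc a b := fun h => (lt_min ha hb).not_ge h.1
  have hαI : (α : ℂ) * I ≠ 0 := mul_ne_zero (ofReal_ne_zero.mpr hα) I_ne_zero
  have hunit : ∀ {x : ℝ}, 0 < x → ‖(x : ℂ) ^ ((α : ℂ) * I)‖ = 1 := fun hx => by
    simp [norm_cpow_eq_rpow_re_of_pos hx]
  rw [integral_cpow (Or.inr ⟨fun h => hαI (by linear_combination h), h0⟩), sub_add_cancel,
    norm_div, norm_mul, norm_I, norm_real, Real.norm_eq_abs, mul_one]
  gcongr
  calc _ ≤ ‖(b : ℂ) ^ ((α : ℂ) * I)‖ + ‖(a : ℂ) ^ ((α : ℂ) * I)‖ := norm_sub_le _ _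
    _ = 2 := by rw [hunit hb, hunit ha]; norm_num

lemma intervalIntegral_norm_sum_mul_cpow_half_add_sq_div_sq {ι : Type*} [Fintype ι] (c : ι → ℂ)
    (ξ : ι → ℝ) {a b : ℝ} (ha : 0 < a) (hb : 0 < b) :
    ∫ y in a..b, ‖∑ j, c j * (y : ℂ) ^ ((1 / 2 : ℂ) + (ξ j : ℂ) * I)‖ ^ 2 / y ^ 2 =
      (∑ j, ∑ k, c j * conj (c k) *
        ∫ y in a..b, (y : ℂ) ^ (((ξ j - ξ k : ℝ) : ℂ) * I - 1)).re := by
  have h0 : (0 : ℝ) ∉ uIcc a b := fun h => (lt_min ha hb).not_ge h.1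
  have hterm : ∀ j k, IntervalIntegrable
      (fun y : ℝ => c j * conj (c k) * (y : ℂ) ^ (((ξ j - ξ k : ℝ) : ℂ) * I - 1)) volume a b :=
    fun j k => (intervalIntegral.intervalIntegrable_cpow (Or.inr h0)).const_mul _
  have hrow : ∀ j, IntervalIntegrable
      (fun y : ℝ => ∑ k, c j * conj (c k) * (y : ℂ) ^ (((ξ j - ξ k : ℝ) : ℂ) * I - 1))
      volume a b := fun j => by
    simpa only [Finset.sum_fn] using IntervalIntegrable.sum _ fun k _ => hterm j k
  have hsum : IntervalIntegrable
      (fun y : ℝ => ∑ j, ∑ k, c j * conj (c k) * (y : ℂ) ^ (((ξ j - ξ k : ℝ) : ℂ) * I - 1))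
      volume a b := by
    simpa only [Finset.sum_fn] using IntervalIntegrable.sum _ fun j _ => hrow j
  have hpos : ∀ y ∈ uIcc a b, 0 < y := fun y hy => (lt_min ha hb).trans_le hy.1
  rw [intervalIntegral.integral_congr fun y hy =>
      norm_sum_mul_cpow_half_add_sq_div_sq c ξ (hpos y hy)]
  refine (intervalIntegral.intervalIntegral_re hsum).trans (congrArg re ?_)
  rw [intervalIntegral.integral_finsetSum fun j _ => hrow j]
  simp_rw [intervalIntegral.integral_finsetSum fun k _ => hterm _ k,
    intervalIntegral.integral_const_mul]

lemma sum_normSq_mul_log_sub_le_intervalIntegral {ι : Type*} [Fintype ι] [DecidableEq ι]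
    (c : ι → ℂ) {ξ : ι → ℝ} (hξ : Function.Injective ξ) {Y : ℝ} (hY : 0 < Y) :
    (∑ j, normSq (c j)) * Real.log Y -
        ∑ j, ∑ k ∈ Finset.univ.erase j, ‖c j‖ * ‖c k‖ * (2 / |ξ j - ξ k|) ≤
      ∫ y in (1 : ℝ)..Y, ‖∑ j, c j * (y : ℂ) ^ ((1 / 2 : ℂ) + (ξ j : ℂ) * I)‖ ^ 2 / y ^ 2 := by
  set T : ι → ι → ℂ := fun j k =>
    c j * conj (c k) * ∫ y in (1 : ℝ)..Y, (y : ℂ) ^ (((ξ j - ξ k : ℝ) : ℂ) * I - 1)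
  have hdiag : ∀ j, (T j j).re = normSq (c j) * Real.log Y := fun j => by
    simp only [T, sub_self, ofReal_zero, zero_mul, zero_sub,
      intervalIntegral_ofReal_cpow_neg_one one_pos hY, div_one, mul_conj, ← ofReal_mul, ofReal_re]
  have hoff : ∀ j, ∀ k ∈ Finset.univ.erase j, -(‖c j‖ * ‖c k‖ * (2 / |ξ j - ξ k|)) ≤ (T j k).re :=
    fun j k hk => by
      have hξjk : ξ j - ξ k ≠ 0 := sub_ne_zero.mpr (hξ.ne (Finset.ne_of_mem_erase hk).symm)
      refine neg_le_of_abs_le ((abs_re_le_norm _).trans ?_)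
      simp only [T, norm_mul, norm_conj]
      gcongr
      exact norm_intervalIntegral_ofReal_cpow_mul_I_sub_one_le hξjk one_pos hY
  rw [intervalIntegral_norm_sum_mul_cpow_half_add_sq_div_sq c ξ one_pos hY, re_sum,
    Finset.sum_mul, ← Finset.sum_sub_distrib]
  refine Finset.sum_le_sum fun j _ => ?_
  rw [re_sum, ← Finset.add_sum_erase _ _ (Finset.mem_univ j), hdiag, sub_eq_add_neg,
    ← Finset.sum_neg_distrib]
  exact add_le_add_right (Finset.sum_le_sum (hoff j)) _

lemma lintegral_Ici_ofReal_eq_top_of_tendsto {F : ℝ → ℝ} {a : ℝ} (hF : ∀ y, 0 ≤ F y)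
    (h : Tendsto (fun Y => ∫ y in a..Y, F y) atTop atTop) :
    ∫⁻ y in Ici a, ENNReal.ofReal (F y) = ⊤ := by
  have hle : ∀ Y, a ≤ Y → ENNReal.ofReal (∫ y in a..Y, F y) ≤ ∫⁻ y in Ici a, ENNReal.ofReal (F y) :=
    fun Y hY => calc
      ENNReal.ofReal (∫ y in a..Y, F y) ≤ ‖∫ y in Ioc a Y, F y‖ₑ := by
        rw [intervalIntegral.integral_of_le hY]; exact Real.ofReal_le_enorm _
      _ ≤ ∫⁻ y in Ioc a Y, ‖F y‖ₑ := enorm_integral_le_lintegral_enorm _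
      _ = ∫⁻ y in Ioc a Y, ENNReal.ofReal (F y) := by
        simp only [Real.enorm_of_nonneg (hF _)]
      _ ≤ ∫⁻ y in Ici a, ENNReal.ofReal (F y) := lintegral_mono_set fun y hy => hy.1.le
  exact top_le_iff.mp <| le_of_tendsto (ENNReal.tendsto_ofReal_atTop.comp h)
    ((eventually_ge_atTop a).mono hle)

theorem stmt2 (n : ℕ) (xiv : Fin n → ℝ) (hxiv : Function.Injective xiv)
    (c : Fin n → ℂ) (hc : ∃ j, c j ≠ 0) :
    ∫⁻ y in Ici (1 : ℝ),
        ENNReal.ofReal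
          (‖∑ j, c j * (y : ℂ) ^ ((1 / 2 : ℂ) + (xiv j : ℂ) * I)‖ ^ 2 / y ^ 2) = ⊤ := by
  obtain ⟨j₀, hj₀⟩ := hc
  have hA : 0 < ∑ j, normSq (c j) :=
    Finset.sum_pos' (fun j _ => normSq_nonneg _) ⟨j₀, Finset.mem_univ _, normSq_pos.mpr hj₀⟩
  refine lintegral_Ici_ofReal_eq_top_of_tendsto (fun y => by positivity) (tendsto_atTop_mono'
    _ ((eventually_gt_atTop 0).mono fun Y hY =>
      sum_normSq_mul_log_sub_le_intervalIntegral c hxiv hY) ?_)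
  exact tendsto_atTop_add_const_right _ _ (tendsto_log_atTop.const_mul_atTop hA)
end
end
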